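/- The function T(ξ) = ξ + η(ξ) is monotone nondecreasing on ℝ. -/

import Mathlib

/-!
Substituting `u = τ - ρξ`, for `ξ > 0` we get `ξ + η(ξ) = (1 + ρ)ξ + m(a, b)` with
`a = -(1 + ρ)ξ`, `b = (1 - ρ)ξ`, where `m(a, b) = N / Z`, `N = ∫_a^b u g(u) du`,
`Z = ∫_a^b g(u) du`, is the mean of the Gaussian weight `g(u) = exp(-u² / c)` truncated to
`[a, b]`. Along the ray, the derivative of this expression times `Z²` equals
`(1 + ρ)(Z² - g(a)(N - aZ)) + (1 - ρ) g(b)(bZ - N)`. Both terms are nonnegative: `N ≤ bZ`, and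
since `|u| ≤ |a|` on `[a, b]` the weight is smallest at `a`, whence
`g(a)(N - aZ) ≤ g(a)(b - a)Z ≤ Z²`. Finally `ξ + η(ξ)` is odd and nonnegative for `ξ ≥ 0`, which
extends monotonicity from `(0, ∞)` to `ℝ`.
-/

open MeasureTheory Real Set

/-- The soft-thresholding function induced by the max-scheduling policy; at
`ξ = 0` both integrals vanish and Lean's `0/0 = 0` gives `eta σ ρ 0 = 0`. -/
noncomputable def eta (σ ρ : ℝ) (ξ : ℝ) : ℝ :=
  (∫ τ in (-|ξ|)..|ξ|, τ * Real.exp (-(τ - ρ * ξ) ^ 2 / (2 * σ ^ 2 * (1 - ρ ^ 2)))) /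
  (∫ τ in (-|ξ|)..|ξ|, Real.exp (-(τ - ρ * ξ) ^ 2 / (2 * σ ^ 2 * (1 - ρ ^ 2))))

noncomputable def truncatedMean (g : ℝ → ℝ) (a b : ℝ) : ℝ :=
  (∫ u in a..b, u * g u) / ∫ u in a..b, g u

section TruncatedMean

variable {g : ℝ → ℝ} {a b : ℝ}

lemma mul_integral_le_integral_mul (hg : Continuous g) (hab : a ≤ b)
    (hg0 : ∀ u ∈ Icc a b, 0 ≤ g u) :
    a * ∫ u in a..b, g u ≤ ∫ u in a..b, u * g u := by
  rw [← intervalIntegral.integral_const_mul]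
  exact intervalIntegral.integral_mono_on hab ((hg.intervalIntegrable _ _).const_mul a)
    ((continuous_id.mul hg).intervalIntegrable _ _)
    fun u hu => mul_le_mul_of_nonneg_right hu.1 (hg0 u hu)

lemma integral_mul_le_mul_integral (hg : Continuous g) (hab : a ≤ b)
    (hg0 : ∀ u ∈ Icc a b, 0 ≤ g u) :
    ∫ u in a..b, u * g u ≤ b * ∫ u in a..b, g u := by
  rw [← intervalIntegral.integral_const_mul]
  exact intervalIntegral.integral_mono_on hab ((continuous_id.mul hg).intervalIntegrable _ _)
    ((hg.intervalIntegrable _ _).const_mul b)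
    fun u hu => mul_le_mul_of_nonneg_right hu.2 (hg0 u hu)

lemma le_truncatedMean (hg : Continuous g) (hab : a ≤ b) (hg0 : ∀ u ∈ Icc a b, 0 ≤ g u)
    (hZ : 0 < ∫ u in a..b, g u) : a ≤ truncatedMean g a b :=
  (le_div_iff₀ hZ).2 (mul_integral_le_integral_mul hg hab hg0)

/-- Bounds the derivative of the truncated mean in its left endpoint by `1`. -/
lemma mul_sub_mul_integral_le_sq_integral (hg : Continuous g) (hab : a ≤ b) (hga : 0 ≤ g a)
    (hmin : ∀ u ∈ Icc a b, g a ≤ g u) :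
    g a * ((∫ u in a..b, u * g u) - a * ∫ u in a..b, g u) ≤ (∫ u in a..b, g u) ^ 2 := by
  have hg0 : ∀ u ∈ Icc a b, 0 ≤ g u := fun u hu => hga.trans (hmin u hu)
  have hZ : (b - a) * g a ≤ ∫ u in a..b, g u := by
    simpa using intervalIntegral.integral_mono_on hab intervalIntegrable_const
      (hg.intervalIntegrable (μ := volume) _ _) hmin
  have hN := integral_mul_le_mul_integral hg hab hg0
  have hZ0 : 0 ≤ ∫ u in a..b, g u := intervalIntegral.integral_nonneg hab hg0
  calc g a * ((∫ u in a..b, u * g u) - a * ∫ u in a..b, g u)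
      ≤ g a * ((b - a) * ∫ u in a..b, g u) := by gcongr; linarith
    _ = ((b - a) * g a) * ∫ u in a..b, g u := by ring
    _ ≤ (∫ u in a..b, g u) ^ 2 := by rw [sq]; gcongr

lemma truncatedMean_comp_sub_right (hg : Continuous g) (s : ℝ)
    (hZ : ∫ u in a - s..b - s, g u ≠ 0) :
    truncatedMean (fun τ => g (τ - s)) a b = s + truncatedMean g (a - s) (b - s) := by
  have hN : ∫ τ in a..b, τ * g (τ - s) =
      (∫ u in a - s..b - s, u * g u) + s * ∫ u in a - s..b - s, g u := by
    have hug : Continuous fun u => u * g u := by fun_prop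
    rw [← intervalIntegral.integral_const_mul,
      ← intervalIntegral.integral_add (hug.intervalIntegrable _ _)
        ((hg.intervalIntegrable _ _).const_mul s),
      ← intervalIntegral.integral_comp_sub_right (fun u => u * g u + s * g u) s]
    exact intervalIntegral.integral_congr fun τ _ => by ring
  rw [truncatedMean, truncatedMean, hN,
    intervalIntegral.integral_comp_sub_right (fun u => g u) s]
  field_simp
  ring

end TruncatedMean

lemma hasDerivAt_integral_scaled_bounds {f : ℝ → ℝ} (hf : Continuous f) (α β x : ℝ) :
    HasDerivAt (fun y => ∫ u in α * y..β * y, f u) (β * f (β * x) - α * f (α * x)) x := by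
  have hsplit : (fun y => ∫ u in α * y..β * y, f u) =
      fun y => (∫ u in 0..β * y, f u) - ∫ u in 0..α * y, f u := by
    funext y
    exact (intervalIntegral.integral_interval_sub_left (hf.intervalIntegrable _ _)
      (hf.intervalIntegrable _ _)).symm
  have hF : ∀ t, HasDerivAt (fun y => ∫ u in 0..t * y, f u) (f (t * x) * t) x := fun t =>
    (hf.integral_hasStrictDerivAt 0 (t * x)).hasDerivAt.comp x
      (by simpa using (hasDerivAt_id x).const_mul t)
  rw [hsplit]
  exact ((hF β).sub (hF α)).congr_deriv (by ring)

section Ray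

variable {g : ℝ → ℝ} {k l : ℝ}

lemma exists_hasDerivAt_add_truncatedMean_nonneg (hg : Continuous g) (hpos : ∀ u, 0 < g u)
    (hrad : ∀ u v, |u| ≤ |v| → g v ≤ g u) (hk : 0 < k) (hl : 0 ≤ l) (hlk : l ≤ k)
    {x : ℝ} (hx : 0 < x) :
    ∃ d, HasDerivAt (fun y => k * y + truncatedMean g (-k * y) (l * y)) d x ∧ 0 ≤ d := by
  set a := -k * x
  set b := l * x
  have hab : a < b := by nlinarith
  set Z := ∫ u in a..b, g u
  set N := ∫ u in a..b, u * g u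
  have hZ : 0 < Z :=
    intervalIntegral.intervalIntegral_pos_of_pos (hg.intervalIntegrable _ _) hpos hab
  have hZ' := hasDerivAt_integral_scaled_bounds hg (-k) l x
  have hN' := hasDerivAt_integral_scaled_bounds (f := fun u => u * g u) (by fun_prop) (-k) l x
  refine ⟨_, ((hasDerivAt_id x).const_mul k).add (hN'.div hZ' hZ.ne'), ?_⟩
  have hba : b ≤ -a := by simp only [a, b]; nlinarith
  have hmin : ∀ u ∈ Icc a b, g a ≤ g u := fun u hu =>
    hrad u a (by
      rw [abs_of_nonpos (a := a) (by linarith)]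
      exact abs_le.2 ⟨by linarith [hu.1], by linarith [hu.2]⟩)
  have hleft := mul_sub_mul_integral_le_sq_integral hg hab.le (hpos a).le hmin
  have hright := integral_mul_le_mul_integral hg hab.le fun u _ => (hpos u).le
  have hdecomp :
      k * 1 + ((l * (b * g b) - -k * (a * g a)) * Z - N * (l * g b - -k * g a)) / Z ^ 2 =
      (k * (Z ^ 2 - g a * (N - a * Z)) + l * g b * (b * Z - N)) / Z ^ 2 := by
    field_simp
    ring
  change 0 ≤ k * 1 + ((l * (b * g b) - -k * (a * g a)) * Z - N * (l * g b - -k * g a)) / Z ^ 2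
  rw [hdecomp]
  exact div_nonneg (add_nonneg (mul_nonneg hk.le (by linarith))
    (mul_nonneg (mul_nonneg hl (hpos b).le) (by linarith))) (sq_nonneg Z)

lemma monotoneOn_add_truncatedMean (hg : Continuous g) (hpos : ∀ u, 0 < g u)
    (hrad : ∀ u v, |u| ≤ |v| → g v ≤ g u) (hk : 0 < k) (hl : 0 ≤ l) (hlk : l ≤ k) :
    MonotoneOn (fun y => k * y + truncatedMean g (-k * y) (l * y)) (Ioi 0) := by
  choose! d hd hd0 using fun x (hx : x ∈ Ioi (0 : ℝ)) =>
    exists_hasDerivAt_add_truncatedMean_nonneg hg hpos hrad hk hl hlk hx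
  rw [← interior_Ioi] at hd hd0
  exact monotoneOn_of_hasDerivWithinAt_nonneg (convex_Ioi 0)
    (fun x hx => (hd x (by rwa [interior_Ioi])).continuousAt.continuousWithinAt)
    (fun x hx => (hd x hx).hasDerivWithinAt) hd0

lemma add_truncatedMean_nonneg (hg : Continuous g) (hpos : ∀ u, 0 < g u) (hk : 0 < k)
    (hl : 0 ≤ l) {x : ℝ} (hx : 0 < x) : 0 ≤ k * x + truncatedMean g (-k * x) (l * x) := by
  have hab : -k * x < l * x := by nlinarith
  have := le_truncatedMean hg hab.le (fun u _ => (hpos u).le)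
    (intervalIntegral.intervalIntegral_pos_of_pos (hg.intervalIntegrable _ _) hpos hab)
  linarith

end Ray

lemma eta_neg (σ ρ ξ : ℝ) : eta σ ρ (-ξ) = -eta σ ρ ξ := by
  simp only [eta, abs_neg]
  set w : ℝ → ℝ := fun τ => rexp (-(τ - ρ * ξ) ^ 2 / (2 * σ ^ 2 * (1 - ρ ^ 2)))
  have hreflect : ∀ τ, rexp (-(τ - ρ * -ξ) ^ 2 / (2 * σ ^ 2 * (1 - ρ ^ 2))) = w (-τ) :=
    fun τ => by simp only [w]; ring_nf
  have hN : ∫ τ in -|ξ|..|ξ|, τ * w (-τ) = -∫ τ in -|ξ|..|ξ|, τ * w τ := by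
    simpa using intervalIntegral.integral_comp_neg (a := -|ξ|) (b := |ξ|) fun τ => -(τ * w τ)
  have hD : ∫ τ in -|ξ|..|ξ|, w (-τ) = ∫ τ in -|ξ|..|ξ|, w τ := by
    simp [intervalIntegral.integral_comp_neg (a := -|ξ|) (b := |ξ|) w]
  simp only [hreflect]
  rw [hN, hD, neg_div]

lemma eta_zero (σ ρ : ℝ) : eta σ ρ 0 = 0 := by
  simp [eta]

lemma eta_eq_add_truncatedMean (σ ρ : ℝ) {ξ : ℝ} (hξ : 0 < ξ) :
    eta σ ρ ξ = ρ * ξ + truncatedMean (fun u => rexp (-u ^ 2 / (2 * σ ^ 2 * (1 - ρ ^ 2))))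
      (-(1 + ρ) * ξ) ((1 - ρ) * ξ) := by
  have hg : Continuous fun u => rexp (-u ^ 2 / (2 * σ ^ 2 * (1 - ρ ^ 2))) := by fun_prop
  rw [eta, abs_of_pos hξ, show -(1 + ρ) * ξ = -ξ - ρ * ξ by ring,
    show (1 - ρ) * ξ = ξ - ρ * ξ by ring, ← truncatedMean_comp_sub_right hg]
  · rfl
  · exact (intervalIntegral.intervalIntegral_pos_of_pos (hg.intervalIntegrable _ _)
      (fun _ => exp_pos _) (by linarith)).ne'

/-- `T(ξ) = ξ + η(ξ)` is monotone nondecreasing on `ℝ`. -/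
theorem T_monotone (σ ρ : ℝ) (hσ : 0 < σ) (hρ0 : 0 ≤ ρ) (hρ1 : ρ < 1) :
    Monotone (fun ξ : ℝ => ξ + eta σ ρ ξ) := by
  set c := 2 * σ ^ 2 * (1 - ρ ^ 2)
  have hc : 0 < c := by
    have : 0 < 1 - ρ ^ 2 := by nlinarith
    positivity
  set g : ℝ → ℝ := fun u => rexp (-u ^ 2 / c)
  have hg : Continuous g := by fun_prop
  have hrad : ∀ u v, |u| ≤ |v| → g v ≤ g u := fun u v huv =>
    exp_le_exp.2 (div_le_div_of_nonneg_right (neg_le_neg (sq_le_sq.2 huv)) hc.le)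
  have hT : ∀ ξ ∈ Ioi (0 : ℝ),
      (1 + ρ) * ξ + truncatedMean g (-(1 + ρ) * ξ) ((1 - ρ) * ξ) = ξ + eta σ ρ ξ :=
    fun ξ hξ => by rw [eta_eq_add_truncatedMean σ ρ hξ]; ring
  have hmono := (monotoneOn_add_truncatedMean hg (fun _ => exp_pos _) hrad (by linarith)
    (by linarith) (by linarith)).congr hT
  refine monotone_of_odd_of_monotoneOn_nonneg (fun ξ => by simp only [eta_neg]; ring) ?_
  intro x hx y hy hxy
  rcases (mem_Ici.1 hx).eq_or_lt with rfl | hx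
  · rcases (mem_Ici.1 hy).eq_or_lt with rfl | hy
    · rfl
    · change 0 + eta σ ρ 0 ≤ y + eta σ ρ y
      rw [eta_zero, add_zero, ← hT y hy]
      exact add_truncatedMean_nonneg hg (fun _ => exp_pos _) (by linarith) (by linarith) hy
  · exact hmono hx (hx.trans_le hxy) hxy
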